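/- Assume θ_i = 0 for all i and the conditions of Theorem 2 case (i) with pivotal user j (so the allowing-partial-revocation equilibrium has d_j* = m_j - (I-j)d^max ∈ (0, d^max)). If additionally ln( ((I-j+1)d^max + ε_i) / ((I-j)d^max + ε_i) ) ≥ ξ_i ℓ_i d^max for all i ∈ {j, j+1, …, I}, then the profile d_i = 0 for i < j and d_i = d^max for i ≥ j is a Nash equilibrium of the restricted game where each user's strategy set is {0, d^max}. -/

import Mathlib

open Finset

/-- Payoff with negligible unlearning costs (`θ_i = 0`). -/
noncomputable def payoff0 {I : ℕ} (ξ ℓ ε : Fin I → ℝ) (i : Fin I)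
    (d : Fin I → ℝ) : ℝ :=
  Real.log (∑ j, d j + ε i) - ξ i * ℓ i * d i

/-- Nash equilibrium of the restricted game forbidding partial revocation:
each user's strategy set is `{0, d^max}`. -/
def IsNashRestricted {I : ℕ} (ξ ℓ ε : Fin I → ℝ) (dmax : ℝ)
    (d : Fin I → ℝ) : Prop :=
  ∀ i : Fin I, ∀ x ∈ ({0, dmax} : Set ℝ),
    payoff0 ξ ℓ ε i (Function.update d i x) ≤ payoff0 ξ ℓ ε i d

/-!
The profile puts the `I - j` users `i ≥ j` at `d^max`, so the total is `S = (I - j) d^max`.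
A user `i < j` who joins gains at most `d^max / (S + ε_i)` in `ln` (by `ln t ≤ t - 1`), which is
at most her privacy cost `ξ_i ℓ_i d^max` because `m_i < m_j < S`, i.e. `(ξ_i ℓ_i)⁻¹ < S + ε_i`.
A user `i ≥ j` who leaves loses exactly `ln ((S + ε_i) / (S - d^max + ε_i))` and saves
`ξ_i ℓ_i d^max`, which is the assumed inequality.
-/

theorem Fin.sum_ite_lt_zero {M : Type*} [AddCommMonoid M] {n : ℕ} (j : Fin n) (c : M) :
    ∑ k : Fin n, (if k < j then 0 else c) = (n - j) • c := by
  rw [sum_ite, sum_const_zero, zero_add, Finset.sum_const, ← Fin.card_Ici]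
  congr 2
  ext k
  simp

theorem Real.log_add_sub_mul_le_log {s x c : ℝ} (hc : 0 < c) (hs : c⁻¹ ≤ s) (hx : 0 ≤ x) :
    Real.log (s + x) - c * x ≤ Real.log s := by
  have hs₀ : 0 < s := (inv_pos.2 hc).trans_le hs
  have hlog : Real.log ((s + x) / s) ≤ x / s := by
    simpa [add_div, hs₀.ne'] using
      Real.log_le_sub_one_of_pos (div_pos (by linarith : 0 < s + x) hs₀)
  have hxs : x / s ≤ c * x := by
    rw [div_le_iff₀ hs₀]
    nlinarith [(inv_le_iff_one_le_mul₀' hc).1 hs]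
  rw [Real.log_div (by linarith) hs₀.ne'] at hlog
  linarith

section Deviation

variable {I : ℕ} {ξ ℓ ε : Fin I → ℝ} {i : Fin I} {d : Fin I → ℝ}

theorem payoff0_update (x : ℝ) :
    payoff0 ξ ℓ ε i (Function.update d i x) =
      Real.log (∑ k, d k - d i + x + ε i) - ξ i * ℓ i * x := by
  rw [payoff0, Finset.sum_update_of_mem (mem_univ i), ← Finset.sum_erase_eq_sub (mem_univ i),
    Function.update_self, Finset.sdiff_singleton_eq_erase]
  ring_nf

theorem payoff0_update_le_of_eq_zero {x : ℝ} (hc : 0 < ξ i * ℓ i) (hdi : d i = 0) (hx : 0 ≤ x)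
    (hinv : (ξ i * ℓ i)⁻¹ ≤ ∑ k, d k + ε i) :
    payoff0 ξ ℓ ε i (Function.update d i x) ≤ payoff0 ξ ℓ ε i d := by
  rw [payoff0_update, payoff0, hdi, mul_zero, sub_zero, sub_zero, add_right_comm]
  exact Real.log_add_sub_mul_le_log hc hinv hx

theorem payoff0_update_zero_le (hdi : 0 ≤ d i) (hpos : 0 < ∑ k, d k - d i + ε i)
    (hlog : ξ i * ℓ i * d i ≤ Real.log ((∑ k, d k + ε i) / (∑ k, d k - d i + ε i))) :
    payoff0 ξ ℓ ε i (Function.update d i 0) ≤ payoff0 ξ ℓ ε i d := by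
  rw [Real.log_div (by linarith) hpos.ne'] at hlog
  rw [payoff0_update, payoff0, add_zero, mul_zero, sub_zero]
  linarith

end Deviation

theorem stmt14_general (I : ℕ) (ξ ℓ ε : Fin I → ℝ) (dmax : ℝ)
    (hξ : ∀ i, 0 < ξ i) (hℓ : ∀ i, 0 < ℓ i) (hε : ∀ i, 0 < ε i)
    (hdmax : 0 < dmax)
    (m : Fin I → ℝ) (hm : ∀ i, m i = (ξ i * ℓ i)⁻¹ - ε i)
    (horder : ∀ i k : Fin I, i < k → m i < m k)
    (j : Fin I)
    (hhi : m j < ((I : ℝ) - (j : ℕ)) * dmax)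
    (hlog : ∀ i : Fin I, j ≤ i →
      ξ i * ℓ i * dmax ≤
        Real.log ((((I : ℝ) - (j : ℕ)) * dmax + ε i) /
          (((I : ℝ) - (j : ℕ) - 1) * dmax + ε i))) :
    IsNashRestricted ξ ℓ ε dmax (fun i => if i < j then 0 else dmax) := by
  set d : Fin I → ℝ := fun i => if i < j then 0 else dmax
  have hsum : ∑ k, d k = ((I : ℝ) - (j : ℕ)) * dmax := by
    rw [Fin.sum_ite_lt_zero, nsmul_eq_mul, Nat.cast_sub j.isLt.le]
  have hjI : ((j : ℕ) : ℝ) + 1 ≤ I := by exact_mod_cast j.isLt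
  intro i x hx
  by_cases hij : i < j
  · have hdi : d i = 0 := if_pos hij
    rcases hx with rfl | rfl
    · rw [← hdi, Function.update_eq_self]
    · refine payoff0_update_le_of_eq_zero (mul_pos (hξ i) (hℓ i)) hdi hdmax.le ?_
      linarith [hm i, horder i j hij]
  · have hdi : d i = dmax := if_neg hij
    rcases hx with rfl | rfl
    · have hrest : ∑ k, d k - d i + ε i = ((I : ℝ) - (j : ℕ) - 1) * dmax + ε i := by
        rw [hsum, hdi]; ring
      refine payoff0_update_zero_le (hdi ▸ hdmax.le) ?_ ?_
      · rw [hrest]; nlinarith [hε i]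
      · rw [hrest, hsum, hdi]; exact hlog i (not_lt.1 hij)
    · rw [← hdi, Function.update_eq_self]

/-- Corollary 2, first bullet: under Theorem 2 case (i) with pivotal user `j`
(interior partial revocation, i.e. `(I-j-1) d^max < m j < (I-j) d^max` in
0-indexed form), if `ln(((I-j) d^max + ε_i)/((I-j-1) d^max + ε_i)) ≥ ξ_i ℓ_i
d^max` for every user `i ≥ j`, then the profile `d_i = 0` for `i < j` and
`d_i = d^max` for `i ≥ j` is a Nash equilibrium of the restricted game. -/
theorem stmt14 (I : ℕ) (ξ ℓ ε : Fin I → ℝ) (dmax : ℝ)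
    (hξ : ∀ i, 0 < ξ i) (hℓ : ∀ i, 0 < ℓ i) (hε : ∀ i, 0 < ε i)
    (hdmax : 0 < dmax)
    (m : Fin I → ℝ) (hm : ∀ i, m i = (ξ i * ℓ i)⁻¹ - ε i)
    (horder : ∀ i k : Fin I, i < k → m i < m k)
    (j : Fin I)
    (hlo : ((I : ℝ) - (j : ℕ) - 1) * dmax < m j)
    (hhi : m j < ((I : ℝ) - (j : ℕ)) * dmax)
    (hlog : ∀ i : Fin I, j ≤ i →
      ξ i * ℓ i * dmax ≤
        Real.log ((((I : ℝ) - (j : ℕ)) * dmax + ε i) /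
          (((I : ℝ) - (j : ℕ) - 1) * dmax + ε i))) :
    IsNashRestricted ξ ℓ ε dmax (fun i => if i < j then 0 else dmax) :=
  stmt14_general I ξ ℓ ε dmax hξ hℓ hε hdmax m hm horder j hhi hlog
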